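/- Let G be a semi-Markovian causal graph with observed variables V, let 𝔸 = {A₀, …, A_m} be a finite collection of subsets of V, and let S ⊆ V. Let G′ be a semi-Markovian subgraph of G whose observed vertex set V′ satisfies S ⊆ V′ ⊆ V, whose unobserved vertices are unobserved vertices of G with both of their G′-children present, and all of whose edges are edges of G; set 𝔸′ = {A_i ∩ V′ : i ∈ [0:m]}. If Q[S] is not g-identifiable from (𝔸′, G′), then Q[S] is not g-identifiable from (𝔸, G). -/

import Mathlib

open scoped Classical

/-- A semi-Markovian causal graph: a DAG over a finite vertex set partitioned into
observed (`obs`) and unobserved (`unobs`) variables, where every unobserved variable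
has no parents and exactly two (distinct, observed) children. -/
structure CausalGraph (ν : Type) [Fintype ν] [DecidableEq ν] where
  obs : Finset ν
  unobs : Finset ν
  disj : Disjoint obs unobs
  E : ν → ν → Prop
  edge_mem : ∀ x y, E x y → x ∈ obs ∪ unobs ∧ y ∈ obs ∪ unobs
  acyclic : ∀ x, ¬ Relation.TransGen E x x
  unobs_no_parent : ∀ u ∈ unobs, ∀ w, ¬ E w u
  unobs_two_children : ∀ u ∈ unobs,
    ∃ a b, a ≠ b ∧ a ∈ obs ∧ b ∈ obs ∧ (∀ w, E u w ↔ w = a ∨ w = b)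

namespace CausalGraph

variable {ν : Type} [Fintype ν] [DecidableEq ν]

def verts (G : CausalGraph ν) : Finset ν := G.obs ∪ G.unobs

/-- A structural equation model over the causal graph `G`: finite nonempty domains
(encoded as finite sets of naturals), a pmf for each unobserved variable, and a
conditional pmf (given an assignment to the parents) for each observed variable. -/
structure SEM (G : CausalGraph ν) where
  dom : ν → Finset ℕ
  dom_ne : ∀ x, (dom x).Nonempty
  pU : ν → ℕ → ℝ
  pU_nonneg : ∀ u n, 0 ≤ pU u n
  pU_sum : ∀ u ∈ G.unobs, ∑ n ∈ dom u, pU u n = 1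
  pO : ν → ℕ → (ν → ℕ) → ℝ
  pO_nonneg : ∀ x n pa, 0 ≤ pO x n pa
  pO_sum : ∀ x ∈ G.obs, ∀ pa : ν → ℕ, ∑ n ∈ dom x, pO x n pa = 1
  pO_par : ∀ x n (pa pa' : ν → ℕ), (∀ p, G.E p x → pa p = pa' p) → pO x n pa = pO x n pa'

namespace SEM

variable {G : CausalGraph ν}

/-- Full assignments: all variables of `G` get values in their domains
(non-vertices are pinned to `0`). -/
noncomputable def fullAssign (M : SEM G) : Finset (ν → ℕ) :=
  Fintype.piFinset (fun x => if x ∈ G.verts then M.dom x else {0})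

/-- Observed assignments `dom(V)`: observed variables get values in their domains
(all other coordinates are pinned to `0`). -/
noncomputable def obsAssign (M : SEM G) : Finset (ν → ℕ) :=
  Fintype.piFinset (fun x => if x ∈ G.obs then M.dom x else {0})

/-- `Q^M[S](v) = Σ_u Π_{X ∈ S} P(x | pa_G(X)) Π_{U} P(u)`. -/
noncomputable def Q (M : SEM G) (S : Finset ν) (v : ν → ℕ) : ℝ :=
  ∑ w ∈ M.fullAssign.filter (fun w => ∀ x ∈ G.obs, w x = v x),
    (∏ x ∈ S, M.pO x (w x) w) * ∏ u ∈ G.unobs, M.pU u (w u)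

/-- The observational distribution `P^M(v) = Q^M[V](v)`. -/
noncomputable def P (M : SEM G) (v : ν → ℕ) : ℝ := M.Q G.obs v

/-- Post-interventional probability `P^M_x(y)`: sum of `Q^M[V∖X]` over all observed
realizations consistent with `x` on `X` and `y` on `Y`. -/
noncomputable def Px (M : SEM G) (X : Finset ν) (x : ν → ℕ) (Y : Finset ν) (y : ν → ℕ) : ℝ :=
  ∑ v ∈ M.obsAssign.filter (fun v => (∀ i ∈ X, v i = x i) ∧ (∀ i ∈ Y, v i = y i)),
    M.Q (G.obs \ X) v

/-- `M ∈ 𝕄⁺(G)`: strictly positive observational distribution. -/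
def positive (M : SEM G) : Prop := ∀ v ∈ M.obsAssign, 0 < M.P v

end SEM

/-- The causal effect of `X` on `Y` is identifiable from `G`. -/
def Identifiable (G : CausalGraph ν) (X Y : Finset ν) : Prop :=
  ∀ M₁ M₂ : SEM G, M₁.positive → M₂.positive →
    (∀ i ∈ G.obs, M₁.dom i = M₂.dom i) →
    (∀ v ∈ M₁.obsAssign, M₁.P v = M₂.P v) →
    ∀ x y : ν → ℕ, (∀ i ∈ X, x i ∈ M₁.dom i) → (∀ i ∈ Y, y i ∈ M₁.dom i) →
      M₁.Px X x Y y = M₂.Px X x Y y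

/-- `Q[S]` is identifiable from `G`. -/
def QIdentifiable (G : CausalGraph ν) (S : Finset ν) : Prop :=
  Identifiable G (G.obs \ S) S

/-- The causal effect of `X` on `Y` is g-identifiable from `(𝔸, G)`. -/
def GIdentifiable (G : CausalGraph ν) (𝔸 : Finset (Finset ν)) (X Y : Finset ν) : Prop :=
  ∀ M₁ M₂ : SEM G, M₁.positive → M₂.positive →
    (∀ i ∈ G.obs, M₁.dom i = M₂.dom i) →
    (∀ A ∈ 𝔸, ∀ v ∈ M₁.obsAssign, M₁.Q A v = M₂.Q A v) →
    ∀ x y : ν → ℕ, (∀ i ∈ X, x i ∈ M₁.dom i) → (∀ i ∈ Y, y i ∈ M₁.dom i) →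
      M₁.Px X x Y y = M₂.Px X x Y y

/-- `Q[S]` is g-identifiable from `(𝔸, G)`. -/
def QGIdentifiable (G : CausalGraph ν) (𝔸 : Finset (Finset ν)) (S : Finset ν) : Prop :=
  GIdentifiable G 𝔸 (G.obs \ S) S

/-- Bidirected edge of `G_X` between `a` and `b`: distinct members of `X` sharing an
unobserved parent (whose two children then necessarily both lie in `X`). -/
def biEdge (G : CausalGraph ν) (X : Finset ν) (a b : ν) : Prop :=
  a ≠ b ∧ a ∈ X ∧ b ∈ X ∧ ∃ u ∈ G.unobs, G.E u a ∧ G.E u b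

/-- `X` is a single c-component of `G`. -/
def SingleC (G : CausalGraph ν) (X : Finset ν) : Prop :=
  X.Nonempty ∧ ∀ a ∈ X, ∀ b ∈ X, Relation.ReflTransGen (G.biEdge X) a b

/-- The c-components of `S`: connected components of the bidirected part of `G_S`. -/
noncomputable def cComponents (G : CausalGraph ν) (S : Finset ν) : Finset (Finset ν) :=
  S.image (fun a => S.filter (fun b => Relation.ReflTransGen (G.biEdge S) a b))

/-- Directed edge of `G_X` (both endpoints in `X`). -/
def dirEdgeIn (G : CausalGraph ν) (X : Finset ν) (a b : ν) : Prop :=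
  a ∈ X ∧ b ∈ X ∧ G.E a b

/-- `Anc_Y(G_X)`: members of `X` having a directed path in `G_X` to some member of `Y`. -/
noncomputable def ancIn (G : CausalGraph ν) (X Y : Finset ν) : Finset ν :=
  X.filter (fun a => ∃ y ∈ Y, Relation.ReflTransGen (G.dirEdgeIn X) a y)

/-- Unobserved vertices of the induced subgraph `G[A]`: unobserved vertices of `G`
both of whose children lie in `A`. -/
noncomputable def inducedUnobs (G : CausalGraph ν) (A : Finset ν) : Finset ν :=
  G.unobs.filter (fun u => ∀ w, G.E u w → w ∈ A)

/-- The induced subgraph `G[A]`. -/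
noncomputable def induced (G : CausalGraph ν) (A : Finset ν) : CausalGraph ν where
  obs := A ∩ G.obs
  unobs := G.inducedUnobs A
  disj := G.disj.mono Finset.inter_subset_right (Finset.filter_subset _ _)
  E x y := G.E x y ∧ x ∈ (A ∩ G.obs) ∪ G.inducedUnobs A ∧ y ∈ (A ∩ G.obs) ∪ G.inducedUnobs A
  edge_mem := fun x y h => ⟨h.2.1, h.2.2⟩
  acyclic := fun x h => G.acyclic x (Relation.TransGen.mono (fun a b (hab : _ ∧ _) => hab.1) x x h)
  unobs_no_parent := fun u hu w hw =>
    G.unobs_no_parent u (Finset.mem_filter.mp hu).1 w hw.1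
  unobs_two_children := by
    intro u hu
    have hu' := Finset.mem_filter.mp hu
    obtain ⟨a, b, hab, ha, hb, hiff⟩ := G.unobs_two_children u hu'.1
    have hEa : G.E u a := (hiff a).mpr (Or.inl rfl)
    have hEb : G.E u b := (hiff b).mpr (Or.inr rfl)
    have haA : a ∈ A := hu'.2 a hEa
    have hbA : b ∈ A := hu'.2 b hEb
    refine ⟨a, b, hab, Finset.mem_inter.mpr ⟨haA, ha⟩, Finset.mem_inter.mpr ⟨hbA, hb⟩, ?_⟩
    intro w
    constructor
    · intro hw; exact (hiff w).mp hw.1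
    · rintro (rfl | rfl)
      · exact ⟨hEa, Finset.mem_union.mpr (Or.inr hu),
          Finset.mem_union.mpr (Or.inl (Finset.mem_inter.mpr ⟨haA, ha⟩))⟩
      · exact ⟨hEb, Finset.mem_union.mpr (Or.inr hu),
          Finset.mem_union.mpr (Or.inl (Finset.mem_inter.mpr ⟨hbA, hb⟩))⟩

/-- `H` is a subgraph of `G`. -/
def IsSubgraph (H G : CausalGraph ν) : Prop :=
  H.obs ⊆ G.obs ∧ H.unobs ⊆ G.unobs ∧ ∀ a b, H.E a b → G.E a b

/-- `H` is an `R`-rooted c-forest: `R` is the root set of `H`, the observed vertex set of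
`H` is a single c-component, and every observed vertex has at most one child in `H`. -/
def IsCForest (H : CausalGraph ν) (R : Finset ν) : Prop :=
  H.obs.filter (fun x => ∀ w, ¬ H.E x w) = R ∧
  H.SingleC H.obs ∧
  ∀ x ∈ H.obs, ∀ w w', H.E x w → H.E x w' → w = w'

end CausalGraph

/-!
Extend a model of `G'` to `G` by giving every vertex outside `G'` the one-point domain `{0}`
and a point mass there. Such a vertex contributes the factor `1` to every product in `Q`,
so the extension has exactly the `Q`-factors of the original model on the trimmed sets
`A ∩ V'`, and the same post-interventional probabilities for `Q[S]`. Two positive models of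
`G'` that agree on `𝔸'` but differ on `Q[S]` thus extend to two positive models of `G` that
agree on `𝔸` but differ on `Q[S]`.
-/

namespace CausalGraph

variable {ν : Type} [Fintype ν] [DecidableEq ν] {G G' : CausalGraph ν}

theorem mem_verts_of_mem_obs {x : ν} (hx : x ∈ G.obs) : x ∈ G.verts :=
  Finset.mem_union_left _ hx

theorem mem_verts_of_mem_unobs {u : ν} (hu : u ∈ G.unobs) : u ∈ G.verts :=
  Finset.mem_union_right _ hu

theorem IsSubgraph.verts_subset (hsub : IsSubgraph G' G) : G'.verts ⊆ G.verts :=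
  Finset.union_subset_union hsub.1 hsub.2.1

theorem IsSubgraph.mem_obs_of_mem_verts (hsub : IsSubgraph G' G) {x : ν} (hx : x ∈ G.obs)
    (hx' : x ∈ G'.verts) : x ∈ G'.obs :=
  (Finset.mem_union.mp hx').resolve_right
    fun hu => Finset.disjoint_left.mp G.disj hx (hsub.2.1 hu)

theorem IsSubgraph.mem_unobs_of_mem_verts (hsub : IsSubgraph G' G) {u : ν} (hu : u ∈ G.unobs)
    (hu' : u ∈ G'.verts) : u ∈ G'.unobs :=
  (Finset.mem_union.mp hu').resolve_left
    fun hx => Finset.disjoint_left.mp G.disj (hsub.1 hx) hu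

namespace SEM

theorem eq_zero_of_mem_fullAssign {M : SEM G} {w : ν → ℕ} (hw : w ∈ M.fullAssign) {x : ν}
    (hx : x ∉ G.verts) : w x = 0 := by
  simpa [hx] using Fintype.mem_piFinset.mp hw x

theorem eq_zero_of_mem_obsAssign {M : SEM G} {v : ν → ℕ} (hv : v ∈ M.obsAssign) {x : ν}
    (hx : x ∉ G.obs) : v x = 0 := by
  simpa [hx] using Fintype.mem_piFinset.mp hv x

@[simps]
noncomputable def extend (hsub : IsSubgraph G' G) (M : SEM G') : SEM G where
  dom x := if x ∈ G'.verts then M.dom x else {0}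
  dom_ne x := by
    split
    · exact M.dom_ne x
    · exact Finset.singleton_nonempty 0
  pU u n := if u ∈ G'.unobs then M.pU u n else if n = 0 then 1 else 0
  pU_nonneg u n := by
    split_ifs
    exacts [M.pU_nonneg u n, zero_le_one, le_rfl]
  pU_sum u hu := by
    by_cases hu' : u ∈ G'.unobs
    · simpa [hu', mem_verts_of_mem_unobs hu'] using M.pU_sum u hu'
    · simp [hu', mt (hsub.mem_unobs_of_mem_verts hu) hu']
  pO x n pa := if x ∈ G'.obs then M.pO x n pa else if n = 0 then 1 else 0
  pO_nonneg x n pa := by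
    split_ifs
    exacts [M.pO_nonneg x n pa, zero_le_one, le_rfl]
  pO_sum x hx pa := by
    by_cases hx' : x ∈ G'.obs
    · simpa [hx', mem_verts_of_mem_obs hx'] using M.pO_sum x hx' pa
    · simp [hx', mt (hsub.mem_obs_of_mem_verts hx) hx']
  pO_par x n pa pa' hpa := by
    by_cases hx' : x ∈ G'.obs
    · simpa only [hx', if_true] using M.pO_par x n pa pa' fun p hp => hpa p (hsub.2.2 p x hp)
    · simp only [hx', if_false]

variable (hsub : IsSubgraph G' G) (M : SEM G')

theorem extend_fullAssign : (M.extend hsub).fullAssign = M.fullAssign := by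
  unfold fullAssign
  congr 1
  funext x
  by_cases hx : x ∈ G'.verts
  · simp [hx, hsub.verts_subset hx]
  · simp [hx]

theorem extend_obsAssign : (M.extend hsub).obsAssign = M.obsAssign := by
  unfold obsAssign
  congr 1
  funext x
  by_cases hx : x ∈ G'.obs
  · simp [hx, hsub.1 hx, mem_verts_of_mem_obs hx]
  · by_cases hxG : x ∈ G.obs
    · simp [hx, hxG, mt (hsub.mem_obs_of_mem_verts hxG) hx]
    · simp [hx, hxG]

theorem extend_Q {A : Finset ν} (hA : A ⊆ G.obs) {v : ν → ℕ}
    (hv : ∀ x ∉ G'.obs, v x = 0) :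
    (M.extend hsub).Q A v = M.Q (A ∩ G'.obs) v := by
  unfold Q
  rw [extend_fullAssign]
  refine Finset.sum_congr (Finset.filter_congr fun w hw => ?_) fun w hw => ?_
  · refine ⟨fun h x hx => h x (hsub.1 hx), fun h x hx => ?_⟩
    by_cases hx' : x ∈ G'.obs
    · exact h x hx'
    · rw [eq_zero_of_mem_fullAssign hw (mt (hsub.mem_obs_of_mem_verts hx) hx'),
        hv x hx']
  have hw := (Finset.mem_filter.mp hw).1
  congr 1
  · calc ∏ x ∈ A, (M.extend hsub).pO x (w x) w
        = ∏ x ∈ A ∩ G'.obs, (M.extend hsub).pO x (w x) w := by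
          refine (Finset.prod_subset Finset.inter_subset_left fun x hxA hx => ?_).symm
          have hx' : x ∉ G'.obs := fun h => hx (Finset.mem_inter.mpr ⟨hxA, h⟩)
          have hwx := eq_zero_of_mem_fullAssign hw (mt (hsub.mem_obs_of_mem_verts (hA hxA)) hx')
          simp [hx', hwx]
      _ = ∏ x ∈ A ∩ G'.obs, M.pO x (w x) w :=
          Finset.prod_congr rfl fun x hx => if_pos (Finset.mem_inter.mp hx).2
  · calc ∏ u ∈ G.unobs, (M.extend hsub).pU u (w u)
        = ∏ u ∈ G'.unobs, (M.extend hsub).pU u (w u) := by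
          refine (Finset.prod_subset hsub.2.1 fun u hu hu' => ?_).symm
          have hwu := eq_zero_of_mem_fullAssign hw (mt (hsub.mem_unobs_of_mem_verts hu) hu')
          simp [hu', hwu]
      _ = ∏ u ∈ G'.unobs, M.pU u (w u) := Finset.prod_congr rfl fun u hu => if_pos hu

theorem extend_positive (hM : M.positive) : (M.extend hsub).positive := by
  intro v hv
  rw [extend_obsAssign] at hv
  rw [P, extend_Q hsub M subset_rfl fun _ => eq_zero_of_mem_obsAssign hv,
    Finset.inter_eq_right.mpr hsub.1]
  exact hM v hv

theorem extend_Px {S : Finset ν} (hS : S ⊆ G'.obs) (x y : ν → ℕ) :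
    (M.extend hsub).Px (G.obs \ S) (G'.obs.piecewise x 0) S y = M.Px (G'.obs \ S) x S y := by
  unfold Px
  rw [extend_obsAssign, Finset.sdiff_sdiff_eq_self (hS.trans hsub.1), Finset.sdiff_sdiff_eq_self hS]
  refine Finset.sum_congr (Finset.filter_congr fun v hv => Iff.and ?_ Iff.rfl) fun v hv => ?_
  · refine ⟨fun h i hi => ?_, fun h i hi => ?_⟩
    · obtain ⟨hi', hiS⟩ := Finset.mem_sdiff.mp hi
      simpa [hi'] using h i (Finset.mem_sdiff.mpr ⟨hsub.1 hi', hiS⟩)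
    · obtain ⟨hiG, hiS⟩ := Finset.mem_sdiff.mp hi
      by_cases hi' : i ∈ G'.obs
      · simpa [hi'] using h i (Finset.mem_sdiff.mpr ⟨hi', hiS⟩)
      · simpa [hi'] using eq_zero_of_mem_obsAssign hv hi'
  · have hv' : ∀ i ∉ G'.obs, v i = 0 := fun _ =>
      eq_zero_of_mem_obsAssign (Finset.mem_filter.mp hv).1
    rw [extend_Q hsub M (hS.trans hsub.1) hv', Finset.inter_eq_left.mpr hS]

end SEM

end CausalGraph

/-- Lemma 2. If `G'` is a semi-Markovian subgraph of `G` with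
`S ⊆ V' ⊆ V` and `𝔸' = {A ∩ V' : A ∈ 𝔸}`, then non-g-identifiability of `Q[S]` from
`(𝔸', G')` implies non-g-identifiability of `Q[S]` from `(𝔸, G)`. -/
theorem not_gid_of_not_gid_subgraph
    {ν : Type} [Fintype ν] [DecidableEq ν] (G G' : CausalGraph ν)
    (𝔸 : Finset (Finset ν)) (h𝔸 : ∀ A ∈ 𝔸, A ⊆ G.obs)
    (S : Finset ν) (hS : S ⊆ G'.obs)
    (hsub : CausalGraph.IsSubgraph G' G) :
    ¬ CausalGraph.QGIdentifiable G' (𝔸.image (fun A => A ∩ G'.obs)) S →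
    ¬ G.QGIdentifiable 𝔸 S := by
  intro hnot hG
  refine hnot fun M₁ M₂ hM₁ hM₂ hdom hQ x y hx hy => ?_
  rw [← M₁.extend_Px hsub hS, ← M₂.extend_Px hsub hS]
  refine hG _ _ (M₁.extend_positive hsub hM₁) (M₂.extend_positive hsub hM₂) (fun i hi => ?_)
    (fun A hA v hv => ?_) _ _ (fun i hi => ?_) (fun i hi => ?_)
  · simp only [CausalGraph.SEM.extend_dom]
    split_ifs with h
    exacts [hdom i (hsub.mem_obs_of_mem_verts hi h), rfl]
  · rw [M₁.extend_obsAssign hsub] at hv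
    have hv' : ∀ i ∉ G'.obs, v i = 0 := fun _ => CausalGraph.SEM.eq_zero_of_mem_obsAssign hv
    rw [M₁.extend_Q hsub (h𝔸 A hA) hv', M₂.extend_Q hsub (h𝔸 A hA) hv']
    exact hQ _ (Finset.mem_image_of_mem _ hA) v hv
  · obtain ⟨hiG, hiS⟩ := Finset.mem_sdiff.mp hi
    by_cases hi' : i ∈ G'.obs
    · simpa [hi', CausalGraph.mem_verts_of_mem_obs hi'] using
        hx i (Finset.mem_sdiff.mpr ⟨hi', hiS⟩)
    · simp [hi', mt (hsub.mem_obs_of_mem_verts hiG) hi']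
  · simpa [CausalGraph.mem_verts_of_mem_obs (hS hi)] using hy i hi
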